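/- arXiv:solv-int/9809008 — 4 statements merged into one kernel-verified Lean document; each statement's English description precedes it below -/
import Mathlib

section
/- Under the stated recurrence hypotheses on the potentials, the Lax equation holds along the Hamiltonian flow of H_N: for every z ∈ ℝ \ {−A₁,…,−A_n}, one has {H_N, U(z)} = −2V(z), {H_N, V(z)} = W_N(z) − U(z)Q_N(z), and {H_N, W_N(z)} = 2Q_N(z)V(z); equivalently, the 2×2 matrix of Poisson brackets ({H_N, (L_N(z))_{ab}})_{ab} equals the commutator [M_N(z), L_N(z)], where L_N(z) = [[V(z), U(z)], [W_N(z), −V(z)]] and M_N(z) = [[0, 1], [Q_N(z), 0]]. -/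
open scoped BigOperators
open Finset Matrix

noncomputable section

/-- Phase space ℝ^{2m}: a point is a pair (q, p). -/
abbrev Phase (m : ℕ) := (Fin m → ℝ) × (Fin m → ℝ)

/-- Partial derivative with respect to `q i`. -/
noncomputable def pdq {m : ℕ} (f : Phase m → ℝ) (i : Fin m) (x : Phase m) : ℝ :=
  deriv (fun t => f (Function.update x.1 i t, x.2)) (x.1 i)

/-- Partial derivative with respect to `p i`. -/
noncomputable def pdp {m : ℕ} (f : Phase m → ℝ) (i : Fin m) (x : Phase m) : ℝ :=
  deriv (fun t => f (x.1, Function.update x.2 i t)) (x.2 i)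

/-- Canonical Poisson bracket {f,g} = Σ_i (∂f/∂p_i ∂g/∂q_i − ∂f/∂q_i ∂g/∂p_i). -/
noncomputable def poisson {m : ℕ} (f g : Phase m → ℝ) (x : Phase m) : ℝ :=
  ∑ i, (pdp f i x * pdq g i x - pdq f i x * pdp g i x)

/-- Partial derivative of a function of q only. -/
noncomputable def pdq' {m : ℕ} (f : (Fin m → ℝ) → ℝ) (i : Fin m) (q : Fin m → ℝ) : ℝ :=
  deriv (fun t => f (Function.update q i t)) (q i)

/-- U(z) = 4z − 4q_{n+1} + 4B − Σ q_i²/(z+A_i). -/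
noncomputable def Ufun (n : ℕ) (A : Fin n → ℝ) (B : ℝ) (z : ℝ) (x : Phase (n+1)) : ℝ :=
  4 * z - 4 * x.1 (Fin.last n) + 4 * B - ∑ i : Fin n, (x.1 i.castSucc) ^ 2 / (z + A i)

/-- V(z) = 2p_{n+1} + Σ p_i q_i/(z+A_i). -/
noncomputable def Vfun (n : ℕ) (A : Fin n → ℝ) (z : ℝ) (x : Phase (n+1)) : ℝ :=
  2 * x.2 (Fin.last n) + ∑ i : Fin n, x.2 i.castSucc * x.1 i.castSucc / (z + A i)

/-- Q_N(z) = z^{N−2} − (1/2) Σ_{k=0}^{N−3} (∂𝒰_{N−k−1}/∂q_{n+1}) z^k. -/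
noncomputable def Qfun (n N : ℕ) (𝒰 : ℕ → (Fin (n+1) → ℝ) → ℝ) (z : ℝ)
    (x : Phase (n+1)) : ℝ :=
  z ^ (N-2) - (1/2) * ∑ k ∈ Finset.range (N-2), pdq' (𝒰 (N-k-1)) (Fin.last n) x.1 * z ^ k

/-- W_N(z) = 4z^{N−1} − 2 Σ_{k=0}^{N−2} 𝒰_{N−k−1} z^k + Σ p_i²/(z+A_i). -/
noncomputable def Wfun (n N : ℕ) (A : Fin n → ℝ) (𝒰 : ℕ → (Fin (n+1) → ℝ) → ℝ) (z : ℝ)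
    (x : Phase (n+1)) : ℝ :=
  4 * z ^ (N-1) - 2 * ∑ k ∈ Finset.range (N-1), 𝒰 (N-k-1) x.1 * z ^ k
    + ∑ i : Fin n, (x.2 i.castSucc) ^ 2 / (z + A i)

/-- α_N(x,y) = (Q_N(x) − Q_N(y))/(x − y). -/
noncomputable def alphaFun (n N : ℕ) (𝒰 : ℕ → (Fin (n+1) → ℝ) → ℝ) (z w : ℝ)
    (x : Phase (n+1)) : ℝ :=
  (Qfun n N 𝒰 z x - Qfun n N 𝒰 w x) / (z - w)

/-- The hierarchy recurrence hypotheses on the potentials 𝒰₀,…,𝒰_M. -/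
def Recur (n M : ℕ) (A : Fin n → ℝ) (B : ℝ) (𝒰 : ℕ → (Fin (n+1) → ℝ) → ℝ) : Prop :=
  (∀ m ≤ M, ContDiff ℝ (⊤ : ℕ∞) (𝒰 m)) ∧
  (∀ q, 𝒰 0 q = 0) ∧
  (∀ q : Fin (n+1) → ℝ, 𝒰 1 q = -2 * q (Fin.last n) - 2 * B) ∧
  (∀ q : Fin (n+1) → ℝ,
      𝒰 2 q = -2 * (q (Fin.last n)) ^ 2 - (1/2) * ∑ i : Fin n, (q i.castSucc) ^ 2) ∧
  (∀ m, 2 ≤ m → m ≤ M → ∀ q : Fin (n+1) → ℝ,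
    (∀ i : Fin n, pdq' (𝒰 m) i.castSucc q
        = (1/2) * q i.castSucc * pdq' (𝒰 (m-1)) (Fin.last n) q
          - A i * pdq' (𝒰 (m-1)) i.castSucc q) ∧
    pdq' (𝒰 m) (Fin.last n) q
        = 𝒰 (m-1) q + (1/2) * ∑ i : Fin n, q i.castSucc * pdq' (𝒰 (m-1)) i.castSucc q
          + (q (Fin.last n) - B) * pdq' (𝒰 (m-1)) (Fin.last n) q)

/-- The Hamiltonian H_N = (1/2) Σ p_i² + 𝒰_N. -/
noncomputable def Hfun (n N : ℕ) (𝒰 : ℕ → (Fin (n+1) → ℝ) → ℝ) (x : Phase (n+1)) : ℝ :=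
  (1/2) * ∑ i : Fin (n+1), (x.2 i) ^ 2 + 𝒰 N x.1

/-- The Lax matrix L_N(z). -/
noncomputable def Lmat (n N : ℕ) (A : Fin n → ℝ) (B : ℝ) (𝒰 : ℕ → (Fin (n+1) → ℝ) → ℝ)
    (z : ℝ) (x : Phase (n+1)) : Matrix (Fin 2) (Fin 2) ℝ :=
  !![Vfun n A z x, Ufun n A B z x; Wfun n N A 𝒰 z x, -Vfun n A z x]

/-- The matrix M_N(z). -/
noncomputable def Mmat (n N : ℕ) (𝒰 : ℕ → (Fin (n+1) → ℝ) → ℝ) (z : ℝ)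
    (x : Phase (n+1)) : Matrix (Fin 2) (Fin 2) ℝ :=
  !![0, 1; Qfun n N 𝒰 z x, 0]

section AuxLemmas
open Finset

lemma hasDerivAt_sum_ite {ι : Type*} [Fintype ι] [DecidableEq ι] (i0 : ι) (c : ι → ℝ)
    (F : ι → ℝ → ℝ) (d t0 : ℝ) (hd : HasDerivAt (fun s => F i0 s) d t0) :
    HasDerivAt (fun t => ∑ i, F i (if i = i0 then t else c i)) d t0 := by
  have h : ∀ i ∈ Finset.univ, HasDerivAt (fun t => F i (if i = i0 then t else c i))
      (if i = i0 then d else 0) t0 := by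
    intro i _
    by_cases h : i = i0
    · subst h; simpa using hd
    · simp only [if_neg h]; exact hasDerivAt_const _ _
  have := HasDerivAt.fun_sum h
  simpa using this

lemma diffAt_update {m : ℕ} {f : (Fin m → ℝ) → ℝ} (hf : ContDiff ℝ (⊤ : ℕ∞) f)
    (q : Fin m → ℝ) (j : Fin m) (t : ℝ) :
    DifferentiableAt ℝ (fun s => f (Function.update q j s)) t := by
  have h1 : Differentiable ℝ (fun s : ℝ => Function.update q j s) := by
    rw [differentiable_pi]
    intro i
    by_cases h : i = j
    · subst h; simpa [Function.update_apply] using differentiable_id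
    · simp only [Function.update_apply, if_neg h]
      exact differentiable_const _
  exact ((hf.differentiable (by simp)).comp h1) t

lemma hasDerivAt_update' {m : ℕ} {f : (Fin m → ℝ) → ℝ} (hf : ContDiff ℝ (⊤ : ℕ∞) f)
    (q : Fin m → ℝ) (j : Fin m) :
    HasDerivAt (fun s => f (Function.update q j s)) (pdq' f j q) (q j) :=
  (diffAt_update hf q j _).hasDerivAt

lemma sum_shift (f : ℕ → ℝ) (z : ℝ) (m : ℕ) :
    ∑ k ∈ Finset.range (m+1), f (m+1-k) * z^k
      = f (m+1) + z * ∑ k ∈ Finset.range m, f (m-k) * z^k := by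
  rw [Finset.sum_range_succ', Finset.mul_sum]
  simp only [Nat.succ_sub_succ, Nat.sub_zero, pow_zero, mul_one, pow_succ]
  rw [add_comm]
  congr 1
  exact Finset.sum_congr rfl fun k _ => by ring

lemma pdq_neg {m : ℕ} (f : Phase m → ℝ) (i : Fin m) (x : Phase m) :
    pdq (fun y => -(f y)) i x = -(pdq f i x) := by
  simp [pdq, deriv.neg]

lemma pdp_neg {m : ℕ} (f : Phase m → ℝ) (i : Fin m) (x : Phase m) :
    pdp (fun y => -(f y)) i x = -(pdp f i x) := by
  simp [pdp, deriv.neg]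

lemma poisson_neg_right {m : ℕ} (f g : Phase m → ℝ) (x : Phase m) :
    poisson f (fun y => -(g y)) x = -(poisson f g x) := by
  unfold poisson
  rw [← Finset.sum_neg_distrib]
  exact Finset.sum_congr rfl fun i _ => by rw [pdq_neg, pdp_neg]; ring

end AuxLemmas
section Derivs
open Finset

variable {n N : ℕ} {A : Fin n → ℝ} {B z : ℝ} {𝒰 : ℕ → (Fin (n+1) → ℝ) → ℝ} (x : Phase (n+1))

lemma castSucc_ne_last' (i : Fin n) : i.castSucc ≠ Fin.last n := (Fin.castSucc_lt_last i).ne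
lemma last_ne_castSucc' (i : Fin n) : Fin.last n ≠ i.castSucc := (Fin.castSucc_lt_last i).ne'

lemma pdq_U_cast (i0 : Fin n) :
    pdq (Ufun n A B z) i0.castSucc x = -(2 * x.1 i0.castSucc / (z + A i0)) := by
  unfold pdq
  have hfun : (fun t => Ufun n A B z (Function.update x.1 i0.castSucc t, x.2))
      = fun t => 4*z - 4*x.1 (Fin.last n) + 4*B
          - ∑ i : Fin n, (if i = i0 then t else x.1 i.castSucc)^2/(z + A i) := by
    funext t
    simp [Ufun, Function.update_apply, Fin.castSucc_inj, last_ne_castSucc' i0]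
  rw [hfun]
  have hd : HasDerivAt (fun s : ℝ => s^2/(z+A i0)) (2*x.1 i0.castSucc/(z+A i0))
      (x.1 i0.castSucc) := by
    simpa using (hasDerivAt_pow 2 (x.1 i0.castSucc)).div_const (z + A i0)
  have h := (hasDerivAt_sum_ite i0 (fun i => x.1 i.castSucc) (fun i s => s^2/(z+A i))
      _ _ hd).const_sub (4*z - 4*x.1 (Fin.last n) + 4*B)
  rw [h.deriv]

lemma pdq_U_last :
    pdq (Ufun n A B z) (Fin.last n) x = -4 := by
  unfold pdq
  have hfun : (fun t => Ufun n A B z (Function.update x.1 (Fin.last n) t, x.2))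
      = fun t => 4*z - 4*t + 4*B - ∑ i : Fin n, (x.1 i.castSucc)^2/(z + A i) := by
    funext t
    simp [Ufun, Function.update_apply, castSucc_ne_last']
  rw [hfun]
  have h1 : HasDerivAt (fun t : ℝ => 4*t) 4 (x.1 (Fin.last n)) := by
    simpa using (hasDerivAt_id (x.1 (Fin.last n))).const_mul (4:ℝ)
  have h := ((h1.const_sub (4*z)).add_const (4*B)).sub_const
      (∑ i : Fin n, (x.1 i.castSucc)^2/(z + A i))
  have h' : HasDerivAt (fun t : ℝ => 4*z - 4*t + 4*B - ∑ i : Fin n, (x.1 i.castSucc)^2/(z + A i))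
      (-4) (x.1 (Fin.last n)) := by convert h using 1 <;> norm_num
  rw [h'.deriv]

lemma pdp_U (j : Fin (n+1)) : pdp (Ufun n A B z) j x = 0 := by
  simp [pdp, Ufun]

lemma pdq_V_cast (i0 : Fin n) :
    pdq (Vfun n A z) i0.castSucc x = x.2 i0.castSucc / (z + A i0) := by
  unfold pdq
  have hfun : (fun t => Vfun n A z (Function.update x.1 i0.castSucc t, x.2))
      = fun t => (∑ i : Fin n, x.2 i.castSucc * (if i = i0 then t else x.1 i.castSucc)/(z + A i))
          + 2*x.2 (Fin.last n) := by
    funext t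
    simp [Vfun, Function.update_apply, Fin.castSucc_inj]
    try ring
  rw [hfun]
  have hd : HasDerivAt (fun s : ℝ => x.2 i0.castSucc * s/(z+A i0))
      (x.2 i0.castSucc/(z+A i0)) (x.1 i0.castSucc) := by
    simpa using ((hasDerivAt_id (x.1 i0.castSucc)).const_mul (x.2 i0.castSucc)).div_const (z + A i0)
  have h := (hasDerivAt_sum_ite i0 (fun i => x.1 i.castSucc)
      (fun i s => x.2 i.castSucc * s/(z+A i)) _ _ hd).add_const (2*x.2 (Fin.last n))
  rw [h.deriv]

lemma pdq_V_last : pdq (Vfun n A z) (Fin.last n) x = 0 := by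
  have hfun : (fun t => Vfun n A z (Function.update x.1 (Fin.last n) t, x.2))
      = fun _ => Vfun n A z x := by
    funext t
    simp [Vfun, Function.update_apply, castSucc_ne_last']
  unfold pdq
  rw [hfun]
  simp

lemma pdp_V_cast (i0 : Fin n) :
    pdp (Vfun n A z) i0.castSucc x = x.1 i0.castSucc / (z + A i0) := by
  unfold pdp
  have hfun : (fun t => Vfun n A z (x.1, Function.update x.2 i0.castSucc t))
      = fun t => (∑ i : Fin n, (if i = i0 then t else x.2 i.castSucc) * x.1 i.castSucc/(z + A i))
          + 2*x.2 (Fin.last n) := by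
    funext t
    simp [Vfun, Function.update_apply, Fin.castSucc_inj, last_ne_castSucc' i0]
    try ring
  rw [hfun]
  have hd : HasDerivAt (fun s : ℝ => s * x.1 i0.castSucc/(z+A i0))
      (x.1 i0.castSucc/(z+A i0)) (x.2 i0.castSucc) := by
    simpa using ((hasDerivAt_id (x.2 i0.castSucc)).mul_const (x.1 i0.castSucc)).div_const (z + A i0)
  have h := (hasDerivAt_sum_ite i0 (fun i => x.2 i.castSucc)
      (fun i s => s * x.1 i.castSucc/(z+A i)) _ _ hd).add_const (2*x.2 (Fin.last n))
  rw [h.deriv]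

lemma pdp_V_last : pdp (Vfun n A z) (Fin.last n) x = 2 := by
  unfold pdp
  have hfun : (fun t => Vfun n A z (x.1, Function.update x.2 (Fin.last n) t))
      = fun t => 2*t + ∑ i : Fin n, x.2 i.castSucc * x.1 i.castSucc/(z + A i) := by
    funext t
    simp [Vfun, Function.update_apply, castSucc_ne_last']
  rw [hfun]
  have h1 : HasDerivAt (fun t : ℝ => 2*t) 2 (x.2 (Fin.last n)) := by
    simpa using (hasDerivAt_id (x.2 (Fin.last n))).const_mul (2:ℝ)
  rw [(h1.add_const _).deriv]

lemma pdq_H (hsm : ContDiff ℝ (⊤ : ℕ∞) (𝒰 N)) (j : Fin (n+1)) :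
    pdq (Hfun n N 𝒰) j x = pdq' (𝒰 N) j x.1 := by
  unfold pdq Hfun pdq'
  simp only [Function.update_apply]
  rw [deriv_const_add]

lemma pdp_H (j : Fin (n+1)) : pdp (Hfun n N 𝒰) j x = x.2 j := by
  unfold pdp Hfun
  have hfun : (fun t => (1/2) * ∑ i : Fin (n+1), (Function.update x.2 j t i)^2 + 𝒰 N x.1)
      = fun t => (1/2) * ∑ i : Fin (n+1), (if i = j then t else x.2 i)^2 + 𝒰 N x.1 := by
    funext t; simp [Function.update_apply]
  rw [hfun]
  have hd : HasDerivAt (fun s : ℝ => s^2) (2 * x.2 j) (x.2 j) := by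
    simpa using hasDerivAt_pow 2 (x.2 j)
  have h := ((hasDerivAt_sum_ite j x.2 (fun _ s => s^2) _ _ hd).const_mul (1/2 : ℝ)).add_const
      (𝒰 N x.1)
  rw [h.deriv]; ring

lemma pdq_W (hsm : ∀ m ≤ N, ContDiff ℝ (⊤ : ℕ∞) (𝒰 m)) (j : Fin (n+1)) :
    pdq (Wfun n N A 𝒰 z) j x
      = -(2 * ∑ k ∈ Finset.range (N-1), pdq' (𝒰 (N-k-1)) j x.1 * z^k) := by
  unfold pdq Wfun
  have hS : HasDerivAt (fun t => ∑ k ∈ Finset.range (N-1), 𝒰 (N-k-1) (Function.update x.1 j t) * z ^ k)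
      (∑ k ∈ Finset.range (N-1), pdq' (𝒰 (N-k-1)) j x.1 * z^k) (x.1 j) := by
    apply HasDerivAt.fun_sum
    intro k _
    exact (hasDerivAt_update' (hsm _ (by omega)) x.1 j).mul_const _
  have h := ((hS.const_mul 2).const_sub (4 * z ^ (N-1))).add_const
      (∑ i : Fin n, (x.2 i.castSucc) ^ 2 / (z + A i))
  rw [h.deriv]

lemma pdp_W_cast (i0 : Fin n) :
    pdp (Wfun n N A 𝒰 z) i0.castSucc x = 2 * x.2 i0.castSucc / (z + A i0) := by
  unfold pdp
  have hfun : (fun t => Wfun n N A 𝒰 z (x.1, Function.update x.2 i0.castSucc t))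
      = fun t => (∑ i : Fin n, (if i = i0 then t else x.2 i.castSucc)^2/(z + A i))
          + (4 * z ^ (N-1) - 2 * ∑ k ∈ Finset.range (N-1), 𝒰 (N-k-1) x.1 * z ^ k) := by
    funext t
    simp only [Wfun, Function.update_apply, Fin.castSucc_inj]
    ring
  rw [hfun]
  have hd : HasDerivAt (fun s : ℝ => s^2/(z+A i0)) (2*x.2 i0.castSucc/(z+A i0))
      (x.2 i0.castSucc) := by
    simpa using (hasDerivAt_pow 2 (x.2 i0.castSucc)).div_const (z + A i0)
  have h := (hasDerivAt_sum_ite i0 (fun i => x.2 i.castSucc) (fun i s => s^2/(z+A i))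
      _ _ hd).add_const (4 * z ^ (N-1) - 2 * ∑ k ∈ Finset.range (N-1), 𝒰 (N-k-1) x.1 * z ^ k)
  rw [h.deriv]

lemma pdp_W_last : pdp (Wfun n N A 𝒰 z) (Fin.last n) x = 0 := by
  unfold pdp
  have hfun : (fun t => Wfun n N A 𝒰 z (x.1, Function.update x.2 (Fin.last n) t))
      = fun _ => Wfun n N A 𝒰 z x := by
    funext t
    simp [Wfun, Function.update_apply, castSucc_ne_last']
  rw [hfun]
  simp

end Derivs
section Invariants
open Finset

variable {n N : ℕ} {A : Fin n → ℝ} {B z : ℝ} {𝒰 : ℕ → (Fin (n+1) → ℝ) → ℝ}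

lemma pdq'_U1_last (h1 : ∀ q : Fin (n+1) → ℝ, 𝒰 1 q = -2 * q (Fin.last n) - 2 * B)
    (q : Fin (n+1) → ℝ) : pdq' (𝒰 1) (Fin.last n) q = -2 := by
  unfold pdq'
  have hfun : (fun t => 𝒰 1 (Function.update q (Fin.last n) t)) = fun t => -2*t - 2*B := by
    funext t; rw [h1]; simp
  rw [hfun]
  have hd : HasDerivAt (fun t : ℝ => -2*t - 2*B) (-2) (q (Fin.last n)) := by
    simpa using ((hasDerivAt_id (q (Fin.last n))).const_mul (-2:ℝ)).sub_const (2*B)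
  rw [hd.deriv]

lemma pdq'_U1_cast (h1 : ∀ q : Fin (n+1) → ℝ, 𝒰 1 q = -2 * q (Fin.last n) - 2 * B)
    (q : Fin (n+1) → ℝ) (i : Fin n) : pdq' (𝒰 1) i.castSucc q = 0 := by
  unfold pdq'
  have hfun : (fun t => 𝒰 1 (Function.update q i.castSucc t))
      = fun _ => -2 * q (Fin.last n) - 2*B := by
    funext t; rw [h1]; simp [Function.update_apply, last_ne_castSucc' i]
  rw [hfun]
  simp

/-- Invariant 1 -/
lemma inv1 (hrec : Recur n N A B 𝒰) (hz : ∀ i, z + A i ≠ 0) (q : Fin (n+1) → ℝ) :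
    ∀ m', m' + 1 ≤ N →
      (∑ i : Fin n, q i.castSucc * pdq' (𝒰 (m'+1)) i.castSucc q / (z + A i))
          + 2 * pdq' (𝒰 (m'+1)) (Fin.last n) q
        = -4*z^m' + 2*(∑ k ∈ Finset.range m', 𝒰 (m'-k) q * z^k)
          - (1/2) * (4*z - 4*q (Fin.last n) + 4*B - ∑ i : Fin n, (q i.castSucc)^2/(z + A i))
            * (∑ k ∈ Finset.range m', pdq' (𝒰 (m'-k)) (Fin.last n) q * z^k) := by
  obtain ⟨hsm, h0, h1, h2, hstep⟩ := hrec
  intro m'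
  induction m' with
  | zero =>
    intro _
    simp [pdq'_U1_cast h1, pdq'_U1_last h1]
    norm_num
  | succ m ih =>
    intro hle
    have ihm := ih (by omega)
    have hst := hstep (m+2) (by omega) hle q
    have e1 : m + 2 - 1 = m + 1 := by omega
    rw [e1] at hst
    have hsum : ∑ i : Fin n, q i.castSucc * pdq' (𝒰 (m+2)) i.castSucc q / (z + A i)
        = (1/2) * pdq' (𝒰 (m+1)) (Fin.last n) q * (∑ i : Fin n, (q i.castSucc)^2/(z + A i))
          - (∑ i : Fin n, q i.castSucc * pdq' (𝒰 (m+1)) i.castSucc q)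
          + z * ∑ i : Fin n, q i.castSucc * pdq' (𝒰 (m+1)) i.castSucc q / (z + A i) := by
      rw [Finset.mul_sum, Finset.mul_sum, ← Finset.sum_sub_distrib, ← Finset.sum_add_distrib]
      refine Finset.sum_congr rfl fun i _ => ?_
      rw [hst.1 i]
      field_simp [hz i]
      ring
    have key : (∑ i : Fin n, q i.castSucc * pdq' (𝒰 (m+2)) i.castSucc q / (z + A i))
          + 2 * pdq' (𝒰 (m+2)) (Fin.last n) q
        = z * ((∑ i : Fin n, q i.castSucc * pdq' (𝒰 (m+1)) i.castSucc q / (z + A i))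
              + 2 * pdq' (𝒰 (m+1)) (Fin.last n) q)
          + 2 * 𝒰 (m+1) q
          - (1/2) * (4*z - 4*q (Fin.last n) + 4*B - ∑ i : Fin n, (q i.castSucc)^2/(z + A i))
            * pdq' (𝒰 (m+1)) (Fin.last n) q := by
      rw [hsum, hst.2]
      ring
    rw [key, ihm, sum_shift (fun j => 𝒰 j q) z m,
      sum_shift (fun j => pdq' (𝒰 j) (Fin.last n) q) z m]
    ring

/-- Invariant 2 -/
lemma inv2 (hrec : Recur n N A B 𝒰) (hz : ∀ i, z + A i ≠ 0) (q p : Fin (n+1) → ℝ) :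
    ∀ m', m' + 1 ≤ N →
      (∑ i : Fin n, p i.castSucc * pdq' (𝒰 (m'+1)) i.castSucc q / (z + A i))
        = -(∑ k ∈ Finset.range m',
              ((∑ i : Fin n, p i.castSucc * pdq' (𝒰 (m'-k)) i.castSucc q)
                + p (Fin.last n) * pdq' (𝒰 (m'-k)) (Fin.last n) q) * z^k)
          + (1/2) * (2*p (Fin.last n) + ∑ i : Fin n, p i.castSucc * q i.castSucc/(z + A i))
            * (∑ k ∈ Finset.range m', pdq' (𝒰 (m'-k)) (Fin.last n) q * z^k) := by
  obtain ⟨hsm, h0, h1, h2, hstep⟩ := hrec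
  intro m'
  induction m' with
  | zero =>
    intro _
    simp [pdq'_U1_cast h1]
  | succ m ih =>
    intro hle
    have ihm := ih (by omega)
    have hst := hstep (m+2) (by omega) hle q
    have e1 : m + 2 - 1 = m + 1 := by omega
    rw [e1] at hst
    have hsum : ∑ i : Fin n, p i.castSucc * pdq' (𝒰 (m+2)) i.castSucc q / (z + A i)
        = (1/2) * pdq' (𝒰 (m+1)) (Fin.last n) q
            * (∑ i : Fin n, p i.castSucc * q i.castSucc/(z + A i))
          - (∑ i : Fin n, p i.castSucc * pdq' (𝒰 (m+1)) i.castSucc q)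
          + z * ∑ i : Fin n, p i.castSucc * pdq' (𝒰 (m+1)) i.castSucc q / (z + A i) := by
      rw [Finset.mul_sum, Finset.mul_sum, ← Finset.sum_sub_distrib, ← Finset.sum_add_distrib]
      refine Finset.sum_congr rfl fun i _ => ?_
      rw [hst.1 i]
      field_simp [hz i]
      ring
    rw [hsum, ihm,
      sum_shift (fun j => ((∑ i : Fin n, p i.castSucc * pdq' (𝒰 j) i.castSucc q)
        + p (Fin.last n) * pdq' (𝒰 j) (Fin.last n) q)) z m,
      sum_shift (fun j => pdq' (𝒰 j) (Fin.last n) q) z m]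
    ring

end Invariants
/-- along the Hamiltonian flow of H_N the Lax equation holds. -/
theorem lax_equation_hierarchy
    (n : ℕ) (hn : 1 ≤ n) (A : Fin n → ℝ) (hA : Function.Injective A) (B : ℝ)
    (N : ℕ) (hN : 3 ≤ N) (𝒰 : ℕ → (Fin (n+1) → ℝ) → ℝ)
    (hrec : Recur n N A B 𝒰) :
    ∀ z : ℝ, (∀ i : Fin n, z ≠ -A i) → ∀ x : Phase (n+1),
      poisson (Hfun n N 𝒰) (Ufun n A B z) x = -2 * Vfun n A z x ∧
      poisson (Hfun n N 𝒰) (Vfun n A z) x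
        = Wfun n N A 𝒰 z x - Ufun n A B z x * Qfun n N 𝒰 z x ∧
      poisson (Hfun n N 𝒰) (Wfun n N A 𝒰 z) x = 2 * Qfun n N 𝒰 z x * Vfun n A z x ∧
      (∀ a b : Fin 2,
        poisson (Hfun n N 𝒰) (fun y => Lmat n N A B 𝒰 z y a b) x
          = (Mmat n N 𝒰 z x * Lmat n N A B 𝒰 z x
              - Lmat n N A B 𝒰 z x * Mmat n N 𝒰 z x) a b) := by
  intro z hzA x
  have hz : ∀ i, z + A i ≠ 0 := fun i h => hzA i (by linarith)
  obtain ⟨N3, rfl⟩ : ∃ N3, N = N3 + 3 := ⟨N - 3, by omega⟩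
  have hsm := hrec.1
  have h1U := hrec.2.2.1
  have e1 : N3 + 3 - 1 = N3 + 2 := by omega
  have e2 : N3 + 3 - 2 = N3 + 1 := by omega
  have e3 : ∀ k, N3 + 3 - k - 1 = N3 + 2 - k := fun k => by omega
  -- poisson bracket with H, expanded
  have hps : ∀ g : Phase (n+1) → ℝ, poisson (Hfun n (N3+3) 𝒰) g x
      = ∑ i : Fin n, (x.2 i.castSucc * pdq g i.castSucc x
          - pdq' (𝒰 (N3+3)) i.castSucc x.1 * pdp g i.castSucc x)
        + (x.2 (Fin.last n) * pdq g (Fin.last n) x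
          - pdq' (𝒰 (N3+3)) (Fin.last n) x.1 * pdp g (Fin.last n) x) := by
    intro g
    unfold poisson
    rw [Fin.sum_univ_castSucc]
    congr 1
    · refine Finset.sum_congr rfl fun i _ => ?_
      rw [pdp_H, pdq_H x (hsm _ le_rfl)]
    · rw [pdp_H, pdq_H x (hsm _ le_rfl)]
  -- splitting the T-sum
  have hsplitT : ∑ k ∈ Finset.range (N3+2), pdq' (𝒰 (N3+2-k)) (Fin.last n) x.1 * z^k
      = (∑ k ∈ Finset.range (N3+1), pdq' (𝒰 (N3+2-k)) (Fin.last n) x.1 * z^k)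
        + (-2) * z^(N3+1) := by
    rw [Finset.sum_range_succ]
    have e4 : N3+2-(N3+1) = 1 := by omega
    rw [e4, pdq'_U1_last h1U]
  -- Statement 1
  have hU : poisson (Hfun n (N3+3) 𝒰) (Ufun n A B z) x = -2 * Vfun n A z x := by
    have hsU : ∑ i : Fin n, (x.2 i.castSucc * pdq (Ufun n A B z) i.castSucc x
          - pdq' (𝒰 (N3+3)) i.castSucc x.1 * pdp (Ufun n A B z) i.castSucc x)
        = (-2) * ∑ i : Fin n, x.2 i.castSucc * x.1 i.castSucc / (z + A i) := by
      rw [Finset.mul_sum]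
      refine Finset.sum_congr rfl fun i _ => ?_
      rw [pdq_U_cast, pdp_U]
      ring
    rw [hps, hsU, pdq_U_last, pdp_U]
    unfold Vfun
    ring
  -- Statement 2
  have I1 := inv1 hrec hz x.1 (N3+2) (by omega)
  simp only [show N3+2+1 = N3+3 from rfl] at I1
  rw [hsplitT] at I1
  have hV : poisson (Hfun n (N3+3) 𝒰) (Vfun n A z) x
      = Wfun n (N3+3) A 𝒰 z x - Ufun n A B z x * Qfun n (N3+3) 𝒰 z x := by
    have hsV : ∑ i : Fin n, (x.2 i.castSucc * pdq (Vfun n A z) i.castSucc x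
          - pdq' (𝒰 (N3+3)) i.castSucc x.1 * pdp (Vfun n A z) i.castSucc x)
        = (∑ i : Fin n, (x.2 i.castSucc)^2/(z + A i))
          - ∑ i : Fin n, x.1 i.castSucc * pdq' (𝒰 (N3+3)) i.castSucc x.1 / (z + A i) := by
      rw [← Finset.sum_sub_distrib]
      refine Finset.sum_congr rfl fun i _ => ?_
      rw [pdq_V_cast, pdp_V_cast]
      ring
    rw [hps, hsV, pdq_V_last, pdp_V_last]
    unfold Wfun Ufun Qfun
    simp only [e1, e2, e3]
    linear_combination (-1 : ℝ) * I1
  -- Statement 3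
  have I2 := inv2 hrec hz x.1 x.2 (N3+2) (by omega)
  simp only [show N3+2+1 = N3+3 from rfl] at I2
  have hPs : ∑ k ∈ Finset.range (N3+2),
        ((∑ i : Fin n, x.2 i.castSucc * pdq' (𝒰 (N3+2-k)) i.castSucc x.1)
          + x.2 (Fin.last n) * pdq' (𝒰 (N3+2-k)) (Fin.last n) x.1) * z^k
      = (∑ k ∈ Finset.range (N3+2),
          (∑ i : Fin n, x.2 i.castSucc * pdq' (𝒰 (N3+2-k)) i.castSucc x.1) * z^k)
        + x.2 (Fin.last n)
          * ∑ k ∈ Finset.range (N3+2), pdq' (𝒰 (N3+2-k)) (Fin.last n) x.1 * z^k := by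
    conv_rhs => rw [Finset.mul_sum]
    rw [← Finset.sum_add_distrib]
    refine Finset.sum_congr rfl fun k _ => ?_
    ring
  rw [hPs, hsplitT] at I2
  have hW1 : ∀ j, pdq (Wfun n (N3+3) A 𝒰 z) j x
      = (-2) * ∑ k ∈ Finset.range (N3+2), pdq' (𝒰 (N3+2-k)) j x.1 * z^k := by
    intro j
    rw [pdq_W x hsm j]
    simp only [e1, e3]
    ring
  have hW : poisson (Hfun n (N3+3) 𝒰) (Wfun n (N3+3) A 𝒰 z) x
      = 2 * Qfun n (N3+3) 𝒰 z x * Vfun n A z x := by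
    have hA1 : ∑ i : Fin n, x.2 i.castSucc * pdq (Wfun n (N3+3) A 𝒰 z) i.castSucc x
        = (-2) * ∑ k ∈ Finset.range (N3+2),
            (∑ i : Fin n, x.2 i.castSucc * pdq' (𝒰 (N3+2-k)) i.castSucc x.1) * z^k := by
      trans ∑ i : Fin n, ∑ k ∈ Finset.range (N3+2),
          (-2) * (x.2 i.castSucc * (pdq' (𝒰 (N3+2-k)) i.castSucc x.1 * z^k))
      · refine Finset.sum_congr rfl fun i _ => ?_
        rw [hW1]
        simp only [Finset.mul_sum]
        exact Finset.sum_congr rfl fun k _ => by ring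
      · rw [Finset.sum_comm, Finset.mul_sum]
        refine Finset.sum_congr rfl fun k _ => ?_
        rw [Finset.sum_mul, Finset.mul_sum]
        exact Finset.sum_congr rfl fun i _ => by ring
    have hsW : ∑ i : Fin n, (x.2 i.castSucc * pdq (Wfun n (N3+3) A 𝒰 z) i.castSucc x
          - pdq' (𝒰 (N3+3)) i.castSucc x.1 * pdp (Wfun n (N3+3) A 𝒰 z) i.castSucc x)
        = ((-2) * ∑ k ∈ Finset.range (N3+2),
            (∑ i : Fin n, x.2 i.castSucc * pdq' (𝒰 (N3+2-k)) i.castSucc x.1) * z^k)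
          - 2 * ∑ i : Fin n, x.2 i.castSucc * pdq' (𝒰 (N3+3)) i.castSucc x.1 / (z + A i) := by
      have hB1 : ∑ i : Fin n, pdq' (𝒰 (N3+3)) i.castSucc x.1 * pdp (Wfun n (N3+3) A 𝒰 z) i.castSucc x
          = 2 * ∑ i : Fin n, x.2 i.castSucc * pdq' (𝒰 (N3+3)) i.castSucc x.1 / (z + A i) := by
        rw [Finset.mul_sum]
        refine Finset.sum_congr rfl fun i _ => ?_
        rw [pdp_W_cast]
        ring
      rw [Finset.sum_sub_distrib, hA1, hB1]
    rw [hps, hsW, hW1 (Fin.last n), pdp_W_last, hsplitT]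
    unfold Qfun Vfun
    simp only [e2, e3]
    linear_combination (-2 : ℝ) * I2
  refine ⟨hU, hV, hW, ?_⟩
  intro a b
  fin_cases a <;> fin_cases b <;>
    simp [Lmat, Mmat, Matrix.sub_apply, Matrix.mul_apply, Fin.sum_univ_two]
  · linear_combination hV
  · linear_combination hU
  · linear_combination hW
  · rw [poisson_neg_right]
    linear_combination (-1 : ℝ) * hV
end
end

section
/- Define 𝒱₀ = 0 and, for every integer m ≥ 1, 𝒱_m(q) = −Σ_{k=0}^{⌊m/2⌋} 2^{1−2k}·binom(m−k, k)·(Σ_{i=1}^n q_i²)^k·q_{n+1}^{m−2k}. Then 𝒱₁ = −2q_{n+1}, 𝒱₂ = −2q_{n+1}² − (1/2)Σ_{i=1}^n q_i², and for every m ≥ 2 the hierarchy recurrence relations with A₁ = ⋯ = A_n = 0 and B = 0 hold: ∂𝒱_m/∂q_i = (1/2)q_i·∂𝒱_{m−1}/∂q_{n+1} for i = 1,…,n, and ∂𝒱_m/∂q_{n+1} = 𝒱_{m−1} + (1/2)Σ_{i=1}^n q_i·∂𝒱_{m−1}/∂q_i + q_{n+1}·∂𝒱_{m−1}/∂q_{n+1}.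 (These 𝒱_m are the principal, many-particle generalizations of the polynomial potentials separable in parabolic coordinates.) -/
open scoped BigOperators
open Finset Matrix

noncomputable section

/-- 𝒱₀ = 0 and, for m ≥ 1,
𝒱_m(q) = −Σ_{k=0}^{⌊m/2⌋} 2^{1−2k}·C(m−k,k)·(Σ q_i²)^k·q_{n+1}^{m−2k}. -/
noncomputable def Vpot (n : ℕ) : ℕ → (Fin (n+1) → ℝ) → ℝ
  | 0 => fun _ => 0
  | (m+1) => fun q =>
      -∑ k ∈ Finset.range ((m+1)/2 + 1),
        (2:ℝ) ^ ((1:ℤ) - 2 * (k:ℤ)) * (Nat.choose (m+1-k) k : ℝ)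
          * (∑ i : Fin n, (q i.castSucc) ^ 2) ^ k * (q (Fin.last n)) ^ (m+1-2*k)

/- ======================= auxiliary development ======================= -/

/-- The coefficient 2^{1-2k}·C(m-k,k). -/
noncomputable def cf (m k : ℕ) : ℝ :=
  (2:ℝ) ^ ((1:ℤ) - 2 * (k:ℤ)) * (Nat.choose (m-k) k : ℝ)

/-- The two-variable polynomial representing 𝒱_m (for m ≥ 1). -/
noncomputable def fP (m : ℕ) (s z : ℝ) : ℝ :=
  -∑ k ∈ Finset.range (m/2+1), cf m k * s ^ k * z ^ (m - 2*k)

/-- ∂fP/∂s. -/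
noncomputable def fPs (m : ℕ) (s z : ℝ) : ℝ :=
  -∑ k ∈ Finset.range (m/2+1), cf m k * ((k:ℝ) * s ^ (k-1)) * z ^ (m - 2*k)

/-- ∂fP/∂z. -/
noncomputable def fPz (m : ℕ) (s z : ℝ) : ℝ :=
  -∑ k ∈ Finset.range (m/2+1), cf m k * s ^ k * (((m - 2*k : ℕ)):ℝ) * z ^ (m - 2*k - 1)

lemma cf_zero {m k : ℕ} (h : m < 2*k) : cf m k = 0 := by
  unfold cf
  rw [Nat.choose_eq_zero_of_lt (by omega)]
  simp

lemma sum_extend (a N : ℕ) (h : a ≤ N) (T : ℕ → ℝ) (hT : ∀ k, a ≤ k → T k = 0) :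
    ∑ k ∈ Finset.range a, T k = ∑ k ∈ Finset.range N, T k := by
  apply Finset.sum_subset (Finset.range_subset_range.mpr h)
  intro k _ hk
  exact hT k (by simpa using hk)

lemma nat_id1 (m k : ℕ) :
    (k+1) * Nat.choose (m+1-k) (k+1) = (m+1-2*k) * Nat.choose (m+1-k) k := by
  have h := Nat.choose_succ_right_eq (m+1-k) k
  have h2 : m+1-k-k = m+1-2*k := by omega
  rw [h2] at h
  rw [mul_comm, h, mul_comm]

lemma nat_id2 (m k : ℕ) (hk : 2*k ≤ m+1) :
    (m+2-2*k) * Nat.choose (m+2-k) k = (m+2-k) * Nat.choose (m+1-k) k := by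
  have h := Nat.choose_mul_succ_eq (m+1-k) k
  have h1 : m+1-k+1 = m+2-k := by omega
  rw [h1] at h
  have h2 : m+2-k-k = m+2-2*k := by omega
  rw [h2] at h
  rw [mul_comm, ← h, mul_comm]

lemma real_id1 (m k : ℕ) :
    ((k:ℝ)+1) * (Nat.choose (m+1-k) (k+1) : ℝ)
      = ((m+1-2*k : ℕ):ℝ) * (Nat.choose (m+1-k) k : ℝ) := by
  exact_mod_cast congrArg (Nat.cast : ℕ → ℝ) (nat_id1 m k)

lemma real_id2 (m k : ℕ) :
    ((m+2-2*k : ℕ):ℝ) * (Nat.choose (m+2-k) k : ℝ)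
      = (Nat.choose (m+1-k) k : ℝ) * (1 + (k:ℝ) + ((m+1-2*k : ℕ):ℝ)) := by
  by_cases h : 2*k ≤ m+1
  · have h1 : (1 + (k:ℝ) + ((m+1-2*k : ℕ):ℝ)) = ((m+2-k : ℕ):ℝ) := by
      rw [Nat.cast_sub (by omega), Nat.cast_sub (by omega)]
      push_cast; ring
    rw [h1, mul_comm ((Nat.choose (m+1-k) k : ℝ)) _]
    exact_mod_cast congrArg (Nat.cast : ℕ → ℝ) (nat_id2 m k h)
  · have hC : Nat.choose (m+1-k) k = 0 := Nat.choose_eq_zero_of_lt (by omega)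
    rw [show m+2-2*k = 0 by omega, hC]
    simp

lemma two_pow_step (k : ℕ) :
    (4:ℝ) * (2:ℝ) ^ ((1:ℤ) - 2 * ((k:ℤ)+1)) = (2:ℝ) ^ ((1:ℤ) - 2 * (k:ℤ)) := by
  rw [show ((1:ℤ) - 2*((k:ℤ)+1)) = ((1:ℤ) - 2*(k:ℤ)) - 2 by ring,
    zpow_sub₀ (two_ne_zero)]
  norm_num
  ring

lemma key1 (m : ℕ) (s z : ℝ) : 4 * fPs (m+2) s z = fPz (m+1) s z := by
  unfold fPs fPz
  rw [show (m+2)/2+1 = (m/2+1)+1 by omega]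
  rw [Finset.sum_range_succ']
  simp only [Nat.cast_zero, zero_mul, mul_zero, add_zero]
  rw [mul_neg, neg_inj, Finset.mul_sum]
  rw [sum_extend (m/2+1) ((m+1)/2+1) (by omega)
      (fun k => 4 * (cf (m+2) (k+1) * ((((k:ℕ)+1:ℕ):ℝ) * s ^ (k+1-1)) * z ^ (m+2 - 2*(k+1))))
      (fun k hk => by
        simp [cf_zero (show m+2 < 2*(k+1) by omega)])]
  apply Finset.sum_congr rfl
  intro k _
  unfold cf
  rw [show m+2-(k+1) = m+1-k by omega, show k+1-1 = k from rfl,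
    show m+2-2*(k+1) = m-2*k by omega, show m+1-2*k-1 = m-2*k by omega]
  push_cast
  have h2 := two_pow_step k
  have h3 := real_id1 m k
  linear_combination (z^(m-2*k) * s^k * ((k:ℝ)+1) * ((Nat.choose (m+1-k) (k+1) : ℕ):ℝ)) * h2
    + ((2:ℝ)^((1:ℤ)-2*(k:ℤ)) * s^k * z^(m-2*k)) * h3

lemma pow_helper (k : ℕ) (s : ℝ) : (k:ℝ) * s^(k-1) * s = (k:ℝ) * s^k := by
  cases k with
  | zero => simp
  | succ k => rw [Nat.add_sub_cancel, mul_assoc, ← pow_succ]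

lemma key2 (m : ℕ) (s z : ℝ) :
    fPz (m+2) s z = fP (m+1) s z + s * fPs (m+1) s z + z * fPz (m+1) s z := by
  unfold fP fPs fPz
  rw [show (m+2)/2+1 = m/2+2 by omega]
  rw [sum_extend ((m+1)/2+1) (m/2+2) (by omega)
      (fun k => cf (m+1) k * s ^ k * z ^ (m+1 - 2*k))
      (fun k hk => by simp [cf_zero (show m+1 < 2*k by omega)]),
    sum_extend ((m+1)/2+1) (m/2+2) (by omega)
      (fun k => cf (m+1) k * ((k:ℝ) * s ^ (k-1)) * z ^ (m+1 - 2*k))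
      (fun k hk => by simp [cf_zero (show m+1 < 2*k by omega)]),
    sum_extend ((m+1)/2+1) (m/2+2) (by omega)
      (fun k => cf (m+1) k * s ^ k * (((m+1 - 2*k : ℕ)):ℝ) * z ^ (m+1 - 2*k - 1))
      (fun k hk => by simp [cf_zero (show m+1 < 2*k by omega)])]
  rw [mul_neg, mul_neg, ← neg_add, ← neg_add, neg_inj, Finset.mul_sum, Finset.mul_sum,
    ← Finset.sum_add_distrib, ← Finset.sum_add_distrib]
  apply Finset.sum_congr rfl
  intro k _
  have e1 : m+2-2*k-1 = m+1-2*k := by omega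
  rw [e1]
  have hs : s * ((k:ℝ) * s^(k-1)) = (k:ℝ) * s^k := by
    rw [← pow_helper k s]; ring
  have hz : z * (((m+1-2*k : ℕ):ℝ) * z^(m+1-2*k-1)) = ((m+1-2*k : ℕ):ℝ) * z^(m+1-2*k) := by
    rw [← pow_helper (m+1-2*k) z]; ring
  unfold cf
  have hc := real_id2 m k
  linear_combination ((2:ℝ)^((1:ℤ)-2*(k:ℤ)) * s^k * z^(m+1-2*k)) * hc
    - ((2:ℝ)^((1:ℤ)-2*(k:ℤ)) * ((Nat.choose (m+1-k) k : ℕ):ℝ) * z^(m+1-2*k)) * hs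
    - ((2:ℝ)^((1:ℤ)-2*(k:ℤ)) * ((Nat.choose (m+1-k) k : ℕ):ℝ) * s^k) * hz

lemma Vpot_eq (n m : ℕ) (hm : 1 ≤ m) (q : Fin (n+1) → ℝ) :
    Vpot n m q = fP m (∑ i : Fin n, (q i.castSucc)^2) (q (Fin.last n)) := by
  obtain ⟨m, rfl⟩ : ∃ m', m = m' + 1 := ⟨m-1, by omega⟩
  rfl

lemma hasDerivAt_fP_s (m : ℕ) (c z a : ℝ) :
    HasDerivAt (fun t => fP m (c + t^2) z) (fPs m (c + a^2) z * (2*a)) a := by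
  have h : ∀ k ∈ Finset.range (m/2+1), HasDerivAt
      (fun t : ℝ => cf m k * (c + t^2)^k * z^(m-2*k))
      (cf m k * ((k:ℝ) * (c + a^2)^(k-1) * (2*a^1)) * z^(m-2*k)) a := by
    intro k _
    have h1 : HasDerivAt (fun t : ℝ => c + t^2) (2*a^1) a := (hasDerivAt_pow 2 a).const_add c
    exact ((h1.pow k).const_mul (cf m k)).mul_const (z^(m-2*k))
  have H := (HasDerivAt.fun_sum h).neg
  have hval : fPs m (c + a^2) z * (2*a)
      = -∑ k ∈ Finset.range (m/2+1),
          cf m k * ((k:ℝ) * (c + a^2)^(k-1) * (2*a^1)) * z^(m-2*k) := by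
    unfold fPs
    rw [neg_mul, neg_inj, Finset.sum_mul]
    apply Finset.sum_congr rfl
    intro k _
    ring
  rw [hval]
  exact H

lemma hasDerivAt_fP_z (m : ℕ) (s a : ℝ) :
    HasDerivAt (fun t => fP m s t) (fPz m s a) a := by
  have h : ∀ k ∈ Finset.range (m/2+1), HasDerivAt
      (fun t : ℝ => cf m k * s^k * t^(m-2*k))
      ((cf m k * s^k) * (((m - 2*k : ℕ)):ℝ) * a^(m-2*k-1)) a := by
    intro k _
    have := (hasDerivAt_pow (m-2*k) a).const_mul (cf m k * s^k)
    rw [mul_assoc]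
    exact this
  have H := (HasDerivAt.fun_sum h).neg
  have hval : fPz m s a
      = -∑ k ∈ Finset.range (m/2+1),
          (cf m k * s^k) * (((m - 2*k : ℕ)):ℝ) * a^(m-2*k-1) := by
    unfold fPz
    rfl
  rw [hval]
  exact H

lemma pdq'_Vpot_castSucc (n m : ℕ) (hm : 1 ≤ m) (q : Fin (n+1) → ℝ) (i : Fin n) :
    pdq' (Vpot n m) i.castSucc q
      = fPs m (∑ j : Fin n, (q j.castSucc)^2) (q (Fin.last n)) * (2 * q i.castSucc) := by
  set c : ℝ := ∑ j ∈ Finset.univ.erase i, (q j.castSucc)^2 with hc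
  have key : ∀ t : ℝ, Vpot n m (Function.update q i.castSucc t)
      = fP m (c + t^2) (q (Fin.last n)) := by
    intro t
    rw [Vpot_eq n m hm]
    congr 1
    · have h1 : ∀ j : Fin n, (Function.update q i.castSucc t j.castSucc)^2
          = Function.update (fun j : Fin n => (q j.castSucc)^2) i (t^2) j := by
        intro j
        rw [Function.update_apply, Function.update_apply]
        by_cases h : j = i
        · simp [h]
        · rw [if_neg (by simpa [Fin.castSucc_inj] using h), if_neg h]
      rw [Finset.sum_congr rfl (fun j _ => h1 j),
        Finset.sum_update_of_mem (Finset.mem_univ i), ← Finset.erase_eq]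
      exact add_comm _ _
    · exact Function.update_of_ne (Fin.castSucc_lt_last i).ne' _ _
  unfold pdq'
  simp only [key]
  rw [(hasDerivAt_fP_s m c (q (Fin.last n)) (q i.castSucc)).deriv]
  congr 2
  rw [hc, Finset.sum_erase_add _ _ (Finset.mem_univ i)]

lemma pdq'_Vpot_last (n m : ℕ) (hm : 1 ≤ m) (q : Fin (n+1) → ℝ) :
    pdq' (Vpot n m) (Fin.last n) q
      = fPz m (∑ j : Fin n, (q j.castSucc)^2) (q (Fin.last n)) := by
  have key : ∀ t : ℝ, Vpot n m (Function.update q (Fin.last n) t)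
      = fP m (∑ j : Fin n, (q j.castSucc)^2) t := by
    intro t
    rw [Vpot_eq n m hm]
    congr 1
    · apply Finset.sum_congr rfl
      intro j _
      rw [Function.update_of_ne (Fin.castSucc_lt_last j).ne]
    · exact Function.update_self _ _ _
  unfold pdq'
  simp only [key]
  exact (hasDerivAt_fP_z m _ (q (Fin.last n))).deriv

/-- the principal potentials 𝒱_m satisfy the hierarchy recurrence with
A₁ = ⋯ = A_n = 0 and B = 0. -/
theorem principal_potentials_recurrence (n : ℕ) (hn : 1 ≤ n) :
    (∀ q : Fin (n+1) → ℝ, Vpot n 1 q = -2 * q (Fin.last n)) ∧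
    (∀ q : Fin (n+1) → ℝ,
      Vpot n 2 q = -2 * (q (Fin.last n)) ^ 2 - (1/2) * ∑ i : Fin n, (q i.castSucc) ^ 2) ∧
    (∀ m, 2 ≤ m → ∀ q : Fin (n+1) → ℝ,
      (∀ i : Fin n, pdq' (Vpot n m) i.castSucc q
          = (1/2) * q i.castSucc * pdq' (Vpot n (m-1)) (Fin.last n) q) ∧
      pdq' (Vpot n m) (Fin.last n) q
          = Vpot n (m-1) q
            + (1/2) * ∑ i : Fin n, q i.castSucc * pdq' (Vpot n (m-1)) i.castSucc q
            + q (Fin.last n) * pdq' (Vpot n (m-1)) (Fin.last n) q) := by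
  refine ⟨?_, ?_, ?_⟩
  · intro q
    rw [Vpot_eq n 1 (by norm_num)]
    unfold fP cf
    norm_num
  · intro q
    rw [Vpot_eq n 2 (by norm_num)]
    unfold fP cf
    rw [show (2:ℕ)/2+1 = 2 from rfl, Finset.sum_range_succ, Finset.sum_range_one]
    norm_num
    ring
  · intro m hm q
    obtain ⟨m', rfl⟩ : ∃ m', m = m' + 2 := ⟨m-2, by omega⟩
    have hm1 : m' + 2 - 1 = m' + 1 := rfl
    rw [hm1]
    set S : ℝ := ∑ j : Fin n, (q j.castSucc)^2 with hS
    constructor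
    · intro i
      rw [pdq'_Vpot_castSucc n (m'+2) (by omega) q i, pdq'_Vpot_last n (m'+1) (by omega) q,
        ← hS, ← key1 m']
      ring
    · rw [pdq'_Vpot_last n (m'+2) (by omega) q, pdq'_Vpot_last n (m'+1) (by omega) q,
        Vpot_eq n (m'+1) (by omega) q, ← hS]
      have hsum : ∑ i : Fin n, q i.castSucc * pdq' (Vpot n (m'+1)) i.castSucc q
          = fPs (m'+1) S (q (Fin.last n)) * (2 * S) := by
        rw [Finset.sum_congr rfl
          (fun i _ => by rw [pdq'_Vpot_castSucc n (m'+1) (by omega) q i, ← hS])]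
        calc ∑ i : Fin n, q i.castSucc * (fPs (m'+1) S (q (Fin.last n)) * (2 * q i.castSucc))
            = ∑ i : Fin n, fPs (m'+1) S (q (Fin.last n)) * 2 * (q i.castSucc)^2 := by
              apply Finset.sum_congr rfl; intros; ring
          _ = fPs (m'+1) S (q (Fin.last n)) * 2 * S := by rw [← Finset.mul_sum, hS]
          _ = fPs (m'+1) S (q (Fin.last n)) * (2 * S) := by ring
      rw [hsum, key2 m']
      ring
end
end

section
/- Let L and L' be m×m matrices of smooth functions on ℝ^{2d}, and suppose there exist m²×m² matrices d₁₂ and d₂₁ with smooth-function entries such that the m²×m² bracket matrix {L ⊗, L'}, defined by ({L ⊗, L'})_{(i,k),(j,l)} = {L_{ij}, L'_{kl}}, satisfies {L ⊗, L'} = [d₁₂, L⊗I_m] − [d₂₁, I_m⊗L']. Then the traces of all powers are in involution: {tr(L^k), tr(L'^l)} = 0 for all integers k, l ≥ 1. -/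
open scoped BigOperators
open Finset Matrix

noncomputable section

open Kronecker

/-- Evaluate a matrix of functions at a phase-space point. -/
def evalM {d : ℕ} {ι κ : Type*} (L : Matrix ι κ (Phase d → ℝ)) (x : Phase d) :
    Matrix ι κ ℝ := fun i j => L i j x

/-- Matrix commutator. -/
def mcomm {α : Type*} [Mul α] [Sub α] (M N : α) : α := M * N - N * M


section Aux

lemma hasDerivAt_pdq_aux {d : ℕ} (f : Phase d → ℝ) (hf : ContDiff ℝ (⊤ : ℕ∞) f) (i : Fin d) (x : Phase d) :
    HasDerivAt (fun t => f (Function.update x.1 i t, x.2)) (pdq f i x) (x.1 i) := by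
  have hγ : HasDerivAt (fun t => ((Function.update x.1 i t, x.2) : Phase d))
      ((Pi.single i (1:ℝ), 0)) (x.1 i) :=
    HasDerivAt.prodMk (hasDerivAt_update x.1 i (x.1 i)) (hasDerivAt_const _ _)
  have h := ((hf.differentiable (by simp) (Function.update x.1 i (x.1 i), x.2)).hasFDerivAt).comp_hasDerivAt _ hγ
  rw [Function.update_eq_self] at h
  have h2 : HasDerivAt (fun t => f (Function.update x.1 i t, x.2)) _ (x.1 i) := h
  rw [show pdq f i x = _ from h2.deriv]
  exact h2

lemma hasDerivAt_pdp_aux {d : ℕ} (f : Phase d → ℝ) (hf : ContDiff ℝ (⊤ : ℕ∞) f) (i : Fin d) (x : Phase d) :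
    HasDerivAt (fun t => f (x.1, Function.update x.2 i t)) (pdp f i x) (x.2 i) := by
  have hγ : HasDerivAt (fun t => ((x.1, Function.update x.2 i t) : Phase d))
      ((0, Pi.single i (1:ℝ))) (x.2 i) :=
    HasDerivAt.prodMk (hasDerivAt_const _ _) (hasDerivAt_update x.2 i (x.2 i))
  have h := ((hf.differentiable (by simp) (x.1, Function.update x.2 i (x.2 i))).hasFDerivAt).comp_hasDerivAt _ hγ
  rw [Function.update_eq_self] at h
  have h2 : HasDerivAt (fun t => f (x.1, Function.update x.2 i t)) _ (x.2 i) := h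
  rw [show pdp f i x = _ from h2.deriv]
  exact h2

lemma hasDerivAt_mul_entry_aux {m : ℕ} {M N : ℝ → Matrix (Fin m) (Fin m) ℝ}
    {M' N' : Matrix (Fin m) (Fin m) ℝ} {t0 : ℝ}
    (hM : ∀ a b, HasDerivAt (fun t => M t a b) (M' a b) t0)
    (hN : ∀ a b, HasDerivAt (fun t => N t a b) (N' a b) t0) (a b : Fin m) :
    HasDerivAt (fun t => (M t * N t) a b) ((M' * N t0 + M t0 * N') a b) t0 := by
  simp only [Matrix.mul_apply, Matrix.add_apply]
  rw [← Finset.sum_add_distrib]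
  exact HasDerivAt.fun_sum (fun c _ => (hM a c).mul (hN c b))

lemma hasDerivAt_pow_entry_aux {m : ℕ} {M : ℝ → Matrix (Fin m) (Fin m) ℝ}
    {M' : Matrix (Fin m) (Fin m) ℝ} {t0 : ℝ}
    (hM : ∀ a b, HasDerivAt (fun t => M t a b) (M' a b) t0) (k : ℕ) :
    ∀ a b, HasDerivAt (fun t => (M t ^ k) a b)
      ((∑ j ∈ Finset.range k, M t0 ^ j * M' * M t0 ^ (k - 1 - j)) a b) t0 := by
  induction k with
  | zero =>
      intro a b
      simp only [pow_zero, Finset.range_zero, Finset.sum_empty, Matrix.zero_apply]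
      exact hasDerivAt_const _ _
  | succ k ih =>
      intro a b
      have step := hasDerivAt_mul_entry_aux (M := fun t => M t ^ k) (N := M)
        (M' := ∑ j ∈ Finset.range k, M t0 ^ j * M' * M t0 ^ (k - 1 - j)) (N' := M') ih hM a b
      have hfun : (fun t => (M t ^ (k+1)) a b) = fun t => (M t ^ k * M t) a b := by
        funext t; rw [pow_succ]
      rw [hfun]
      convert step using 2
      rw [Finset.sum_range_succ, Finset.sum_mul]
      rw [show k + 1 - 1 - k = 0 from by omega, pow_zero, mul_one]
      refine congrFun (congrFun (congrArg (· + M t0 ^ k * M') ?_) a) b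
      apply Finset.sum_congr rfl
      intro j hj
      rw [Finset.mem_range] at hj
      rw [mul_assoc (M t0 ^ j * M'), ← pow_succ,
        show k - 1 - j + 1 = k + 1 - 1 - j from by omega]

lemma hasDerivAt_trace_pow_aux {m : ℕ} {M : ℝ → Matrix (Fin m) (Fin m) ℝ}
    {M' : Matrix (Fin m) (Fin m) ℝ} {t0 : ℝ}
    (hM : ∀ a b, HasDerivAt (fun t => M t a b) (M' a b) t0) (k : ℕ) :
    HasDerivAt (fun t => Matrix.trace (M t ^ k)) ((k : ℝ) * Matrix.trace (M t0 ^ (k - 1) * M')) t0 := by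
  have h : HasDerivAt (fun t => ∑ a, (M t ^ k) a a)
      (∑ a, (∑ j ∈ Finset.range k, M t0 ^ j * M' * M t0 ^ (k - 1 - j)) a a) t0 :=
    HasDerivAt.fun_sum (fun a _ => hasDerivAt_pow_entry_aux hM k a a)
  have htr : (∑ a, (∑ j ∈ Finset.range k, M t0 ^ j * M' * M t0 ^ (k - 1 - j)) a a)
      = (k : ℝ) * Matrix.trace (M t0 ^ (k - 1) * M') := by
    have h1 : (∑ a, (∑ j ∈ Finset.range k, M t0 ^ j * M' * M t0 ^ (k - 1 - j)) a a)
        = Matrix.trace (∑ j ∈ Finset.range k, M t0 ^ j * M' * M t0 ^ (k - 1 - j)) := rfl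
    rw [h1, Matrix.trace_sum]
    have h2 : ∀ j ∈ Finset.range k,
        Matrix.trace (M t0 ^ j * M' * M t0 ^ (k - 1 - j)) = Matrix.trace (M t0 ^ (k-1) * M') := by
      intro j hj
      rw [Finset.mem_range] at hj
      rw [Matrix.trace_mul_cycle, ← pow_add, show k - 1 - j + j = k - 1 from by omega]
    rw [Finset.sum_congr rfl h2, Finset.sum_const, Finset.card_range, nsmul_eq_mul]
  rw [← htr]
  exact h

lemma pdq_trace_pow_aux {d m : ℕ} (L : Matrix (Fin m) (Fin m) (Phase d → ℝ))
    (hL : ∀ i j, ContDiff ℝ (⊤ : ℕ∞) (L i j)) (k : ℕ) (i : Fin d) (x : Phase d) :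
    pdq (fun y => Matrix.trace (evalM L y ^ k)) i x
      = (k : ℝ) * Matrix.trace (evalM L x ^ (k - 1) * Matrix.of (fun a b => pdq (L a b) i x)) := by
  have h := hasDerivAt_trace_pow_aux (M := fun t => evalM L (Function.update x.1 i t, x.2))
    (M' := Matrix.of (fun a b => pdq (L a b) i x)) (t0 := x.1 i)
    (fun a b => hasDerivAt_pdq_aux (L a b) (hL a b) i x) k
  rw [Function.update_eq_self] at h
  have h2 : evalM L (x.1, x.2) = evalM L x := rfl
  rw [h2] at h
  exact h.deriv

lemma pdp_trace_pow_aux {d m : ℕ} (L : Matrix (Fin m) (Fin m) (Phase d → ℝ))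
    (hL : ∀ i j, ContDiff ℝ (⊤ : ℕ∞) (L i j)) (k : ℕ) (i : Fin d) (x : Phase d) :
    pdp (fun y => Matrix.trace (evalM L y ^ k)) i x
      = (k : ℝ) * Matrix.trace (evalM L x ^ (k - 1) * Matrix.of (fun a b => pdp (L a b) i x)) := by
  have h := hasDerivAt_trace_pow_aux (M := fun t => evalM L (x.1, Function.update x.2 i t))
    (M' := Matrix.of (fun a b => pdp (L a b) i x)) (t0 := x.2 i)
    (fun a b => hasDerivAt_pdp_aux (L a b) (hL a b) i x) k
  rw [Function.update_eq_self] at h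
  have h2 : evalM L (x.1, x.2) = evalM L x := rfl
  rw [h2] at h
  exact h.deriv

lemma trace_mul_comm_vanish_aux {n : Type*} [Fintype n] [DecidableEq n]
    (C X Y : Matrix n n ℝ) (hc : C * Y = Y * C) :
    Matrix.trace (C * (X * Y - Y * X)) = 0 := by
  rw [Matrix.mul_sub, Matrix.trace_sub, ← mul_assoc, Matrix.trace_mul_comm (C * X) Y,
    ← mul_assoc, ← hc, mul_assoc]
  ring

end Aux

set_option maxHeartbeats 1000000 in
/-- if the Poisson brackets of the entries of L and L' have the linear
r-matrix form with matrices d₁₂, d₂₁, then the traces of all powers are in involution. -/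
theorem traces_in_involution
    (d m : ℕ) (hd : 1 ≤ d) (hm : 1 ≤ m)
    (L L' : Matrix (Fin m) (Fin m) (Phase d → ℝ))
    (hL : ∀ i j, ContDiff ℝ (⊤ : ℕ∞) (L i j)) (hL' : ∀ i j, ContDiff ℝ (⊤ : ℕ∞) (L' i j))
    (d12 d21 : Matrix (Fin m × Fin m) (Fin m × Fin m) (Phase d → ℝ))
    (hd12 : ∀ a b, ContDiff ℝ (⊤ : ℕ∞) (d12 a b)) (hd21 : ∀ a b, ContDiff ℝ (⊤ : ℕ∞) (d21 a b))
    (hrs : ∀ x : Phase d, ∀ i j k l : Fin m,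
      poisson (L i j) (L' k l) x
        = (mcomm (evalM d12 x) (evalM L x ⊗ₖ (1 : Matrix (Fin m) (Fin m) ℝ))
            - mcomm (evalM d21 x) ((1 : Matrix (Fin m) (Fin m) ℝ) ⊗ₖ evalM L' x))
            (i, k) (j, l)) :
    ∀ k l : ℕ, 1 ≤ k → 1 ≤ l → ∀ x : Phase d,
      poisson (fun y => Matrix.trace (evalM L y ^ k))
        (fun y => Matrix.trace (evalM L' y ^ l)) x = 0 := by
  intro k l hk hl x
  set A := evalM L x with hA
  set B := evalM L' x with hB
  set A' := A ^ (k - 1) with hA'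
  set B' := B ^ (l - 1) with hB'
  set P : Matrix (Fin m × Fin m) (Fin m × Fin m) ℝ :=
    ∑ i, (Matrix.of (fun a b => pdp (L a b) i x) ⊗ₖ Matrix.of (fun a b => pdq (L' a b) i x)
      - Matrix.of (fun a b => pdq (L a b) i x) ⊗ₖ Matrix.of (fun a b => pdp (L' a b) i x))
    with hP
  have step1 : poisson (fun y => Matrix.trace (evalM L y ^ k))
      (fun y => Matrix.trace (evalM L' y ^ l)) x
      = (k : ℝ) * l * Matrix.trace ((A' ⊗ₖ B') * P) := by
    rw [poisson]
    have hterm : ∀ i : Fin d,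
        pdp (fun y => Matrix.trace (evalM L y ^ k)) i x
            * pdq (fun y => Matrix.trace (evalM L' y ^ l)) i x
          - pdq (fun y => Matrix.trace (evalM L y ^ k)) i x
            * pdp (fun y => Matrix.trace (evalM L' y ^ l)) i x
        = (k : ℝ) * l * Matrix.trace ((A' ⊗ₖ B')
            * (Matrix.of (fun a b => pdp (L a b) i x) ⊗ₖ Matrix.of (fun a b => pdq (L' a b) i x)
              - Matrix.of (fun a b => pdq (L a b) i x) ⊗ₖ Matrix.of (fun a b => pdp (L' a b) i x))) := by
      intro i
      rw [pdp_trace_pow_aux L hL k i x, pdq_trace_pow_aux L' hL' l i x,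
        pdq_trace_pow_aux L hL k i x, pdp_trace_pow_aux L' hL' l i x,
        Matrix.mul_sub, Matrix.trace_sub, ← Matrix.mul_kronecker_mul, ← Matrix.mul_kronecker_mul,
        Matrix.trace_kronecker, Matrix.trace_kronecker, ← hA, ← hB, ← hA', ← hB']
      ring
    rw [Finset.sum_congr rfl (fun i _ => hterm i), ← Finset.mul_sum, ← Matrix.trace_sum,
      ← Finset.mul_sum, ← hP]
  have hPeq : P = (mcomm (evalM d12 x) (A ⊗ₖ (1 : Matrix (Fin m) (Fin m) ℝ))
      - mcomm (evalM d21 x) ((1 : Matrix (Fin m) (Fin m) ℝ) ⊗ₖ B)) := by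
    ext ⟨a, c⟩ ⟨b, e⟩
    have h1 : P (a, c) (b, e) = poisson (L a b) (L' c e) x := by
      rw [hP]
      simp only [Matrix.sum_apply, Matrix.sub_apply, Matrix.kroneckerMap_apply, Matrix.of_apply,
        poisson]
    rw [h1, hrs x a b c e, hA, hB]
  have hcomm1 : (A' ⊗ₖ B') * (A ⊗ₖ (1 : Matrix (Fin m) (Fin m) ℝ))
      = (A ⊗ₖ (1 : Matrix (Fin m) (Fin m) ℝ)) * (A' ⊗ₖ B') := by
    rw [← Matrix.mul_kronecker_mul, ← Matrix.mul_kronecker_mul, mul_one, one_mul,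
      hA', ← pow_succ, ← pow_succ']
  have hcomm2 : (A' ⊗ₖ B') * ((1 : Matrix (Fin m) (Fin m) ℝ) ⊗ₖ B)
      = ((1 : Matrix (Fin m) (Fin m) ℝ) ⊗ₖ B) * (A' ⊗ₖ B') := by
    rw [← Matrix.mul_kronecker_mul, ← Matrix.mul_kronecker_mul, mul_one, one_mul,
      hB', ← pow_succ, ← pow_succ']
  rw [step1, hPeq, Matrix.mul_sub, Matrix.trace_sub,
    show mcomm (evalM d12 x) (A ⊗ₖ (1 : Matrix (Fin m) (Fin m) ℝ))
      = evalM d12 x * (A ⊗ₖ (1 : Matrix (Fin m) (Fin m) ℝ))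
        - (A ⊗ₖ (1 : Matrix (Fin m) (Fin m) ℝ)) * evalM d12 x from rfl,
    show mcomm (evalM d21 x) ((1 : Matrix (Fin m) (Fin m) ℝ) ⊗ₖ B)
      = evalM d21 x * ((1 : Matrix (Fin m) (Fin m) ℝ) ⊗ₖ B)
        - ((1 : Matrix (Fin m) (Fin m) ℝ) ⊗ₖ B) * evalM d21 x from rfl,
    trace_mul_comm_vanish_aux (A' ⊗ₖ B') (evalM d12 x) (A ⊗ₖ (1 : Matrix (Fin m) (Fin m) ℝ)) hcomm1,
    trace_mul_comm_vanish_aux (A' ⊗ₖ B') (evalM d21 x) ((1 : Matrix (Fin m) (Fin m) ℝ) ⊗ₖ B) hcomm2]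
  ring
end
end

section
/- Let L and L' be m×m matrices of smooth functions on ℝ^{2d}, set L₁ = L⊗I_m and L₂ = I_m⊗L', and suppose there exist m²×m² matrices d₁₂, d₂₁ of smooth functions with {L ⊗, L'} = [d₁₂, L₁] − [d₂₁, L₂], where ({L ⊗, L'})_{(i,k),(j,l)} = {L_{ij}, L'_{kl}}. Then for all integers k, l ≥ 1 the bracket matrix of powers, ({L^k ⊗, L'^l})_{(i,k'),(j,l')} = {(L^k)_{ij}, (L'^l)_{k'l'}}, satisfies {L^k ⊗, L'^l} = [d₁₂^{(k,l)}, L₁] − [d₂₁^{(k,l)}, L₂], where d₁₂^{(k,l)} = Σ_{a=0}^{k−1} Σ_{b=0}^{l−1} L₁^{k−1−a} L₂^{l−1−b} d₁₂ L₁^{a} L₂^{b} and d₂₁^{(k,l)} is given by the same formula with d₂₁ in place of d₁₂. -/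
open scoped BigOperators
open Finset Matrix

noncomputable section

open Kronecker

/-- The dressed matrix d^{(k,l)} built from d, L₁ = L⊗I and L₂ = I⊗L'. -/
noncomputable def dressed {m : ℕ} (L1 L2 D : Matrix (Fin m × Fin m) (Fin m × Fin m) ℝ)
    (k l : ℕ) : Matrix (Fin m × Fin m) (Fin m × Fin m) ℝ :=
  ∑ a ∈ Finset.range k, ∑ b ∈ Finset.range l,
    L1 ^ (k-1-a) * L2 ^ (l-1-b) * D * L1 ^ a * L2 ^ b

lemma curve_q_diff {d : ℕ} (x : Phase d) (i : Fin d) :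
    Differentiable ℝ (fun t : ℝ => ((Function.update x.1 i t, x.2) : Phase d)) := by
  apply Differentiable.prodMk
  · rw [differentiable_pi]
    intro j
    by_cases h : j = i
    · simp [h, Function.update_apply]
    · simp [Function.update_apply, h]
  · exact differentiable_const _

lemma curve_p_diff {d : ℕ} (x : Phase d) (i : Fin d) :
    Differentiable ℝ (fun t : ℝ => ((x.1, Function.update x.2 i t) : Phase d)) := by
  apply Differentiable.prodMk
  · exact differentiable_const _
  · rw [differentiable_pi]
    intro j
    by_cases h : j = i
    · simp [h, Function.update_apply]
    · simp [Function.update_apply, h]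

lemma diffAt_q {d : ℕ} {f : Phase d → ℝ} (hf : ContDiff ℝ (⊤ : ℕ∞) f) (x : Phase d) (i : Fin d) (t : ℝ) :
    DifferentiableAt ℝ (fun t => f (Function.update x.1 i t, x.2)) t :=
  ((hf.differentiable (by simp)).comp (curve_q_diff x i)).differentiableAt

lemma diffAt_p {d : ℕ} {f : Phase d → ℝ} (hf : ContDiff ℝ (⊤ : ℕ∞) f) (x : Phase d) (i : Fin d) (t : ℝ) :
    DifferentiableAt ℝ (fun t => f (x.1, Function.update x.2 i t)) t :=
  ((hf.differentiable (by simp)).comp (curve_p_diff x i)).differentiableAt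

lemma pdq_mul {d : ℕ} {f g : Phase d → ℝ} (hf : ContDiff ℝ (⊤ : ℕ∞) f) (hg : ContDiff ℝ (⊤ : ℕ∞) g)
    (i : Fin d) (x : Phase d) :
    pdq (fun y => f y * g y) i x = pdq f i x * g x + f x * pdq g i x := by
  unfold pdq
  rw [deriv_fun_mul (diffAt_q hf x i _) (diffAt_q hg x i _)]
  simp

lemma pdp_mul {d : ℕ} {f g : Phase d → ℝ} (hf : ContDiff ℝ (⊤ : ℕ∞) f) (hg : ContDiff ℝ (⊤ : ℕ∞) g)
    (i : Fin d) (x : Phase d) :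
    pdp (fun y => f y * g y) i x = pdp f i x * g x + f x * pdp g i x := by
  unfold pdp
  rw [deriv_fun_mul (diffAt_p hf x i _) (diffAt_p hg x i _)]
  simp

lemma pdq_sum {d : ℕ} {ι : Type*} (s : Finset ι) (F : ι → Phase d → ℝ)
    (hF : ∀ c ∈ s, ContDiff ℝ (⊤ : ℕ∞) (F c)) (i : Fin d) (x : Phase d) :
    pdq (fun y => ∑ c ∈ s, F c y) i x = ∑ c ∈ s, pdq (F c) i x := by
  unfold pdq
  rw [deriv_fun_sum (fun c hc => diffAt_q (hF c hc) x i _)]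

lemma pdp_sum {d : ℕ} {ι : Type*} (s : Finset ι) (F : ι → Phase d → ℝ)
    (hF : ∀ c ∈ s, ContDiff ℝ (⊤ : ℕ∞) (F c)) (i : Fin d) (x : Phase d) :
    pdp (fun y => ∑ c ∈ s, F c y) i x = ∑ c ∈ s, pdp (F c) i x := by
  unfold pdp
  rw [deriv_fun_sum (fun c hc => diffAt_p (hF c hc) x i _)]

lemma poisson_mul_left {d : ℕ} {f g : Phase d → ℝ} (hf : ContDiff ℝ (⊤ : ℕ∞) f) (hg : ContDiff ℝ (⊤ : ℕ∞) g)
    (h : Phase d → ℝ) (x : Phase d) :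
    poisson (fun y => f y * g y) h x = f x * poisson g h x + g x * poisson f h x := by
  unfold poisson
  rw [Finset.mul_sum, Finset.mul_sum, ← Finset.sum_add_distrib]
  refine Finset.sum_congr rfl fun i _ => ?_
  rw [pdq_mul hf hg, pdp_mul hf hg]
  ring

lemma poisson_sum_left {d : ℕ} {ι : Type*} (s : Finset ι) (F : ι → Phase d → ℝ)
    (hF : ∀ c ∈ s, ContDiff ℝ (⊤ : ℕ∞) (F c)) (h : Phase d → ℝ) (x : Phase d) :
    poisson (fun y => ∑ c ∈ s, F c y) h x = ∑ c ∈ s, poisson (F c) h x := by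
  unfold poisson
  rw [Finset.sum_comm]
  refine Finset.sum_congr rfl fun i _ => ?_
  rw [pdq_sum s F hF, pdp_sum s F hF, Finset.sum_mul, Finset.sum_mul, ← Finset.sum_sub_distrib]

lemma poisson_antisymm {d : ℕ} (f g : Phase d → ℝ) (x : Phase d) :
    poisson f g x = -poisson g f x := by
  unfold poisson
  rw [← Finset.sum_neg_distrib]
  refine Finset.sum_congr rfl fun i _ => ?_
  ring

lemma smooth_pow_entry {d m : ℕ} (L : Matrix (Fin m) (Fin m) (Phase d → ℝ))
    (hL : ∀ i j, ContDiff ℝ (⊤ : ℕ∞) (L i j)) (k : ℕ) (i j : Fin m) :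
    ContDiff ℝ (⊤ : ℕ∞) (fun y => (evalM L y ^ k) i j) := by
  induction k generalizing i j with
  | zero => simp only [pow_zero]; exact contDiff_const
  | succ k ih =>
    have : (fun y => (evalM L y ^ (k+1)) i j)
        = fun y => ∑ c, (evalM L y ^ k) i c * L c j y := by
      funext y; rw [pow_succ, Matrix.mul_apply]; rfl
    rw [this]
    exact ContDiff.sum fun c _ => (ih i c).mul (hL c j)

lemma poisson_pow_left {d m : ℕ} (L : Matrix (Fin m) (Fin m) (Phase d → ℝ))
    (hL : ∀ i j, ContDiff ℝ (⊤ : ℕ∞) (L i j)) :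
    ∀ k : ℕ, 1 ≤ k → ∀ (h : Phase d → ℝ) (x : Phase d) (i j : Fin m),
    poisson (fun y => (evalM L y ^ k) i j) h x
      = ∑ a ∈ Finset.range k, ∑ α, ∑ β,
          (evalM L x ^ (k-1-a)) i α * (evalM L x ^ a) β j * poisson (L α β) h x := by
  intro k
  induction k with
  | zero => omega
  | succ k ih =>
    intro _ h x i j
    rcases Nat.eq_zero_or_pos k with hk | hk
    · subst hk
      have : (fun y => (evalM L y ^ 1) i j) = L i j := by
        funext y; rw [pow_one]; rfl
      rw [this]
      simp [Matrix.one_apply, Finset.sum_ite_eq, Finset.sum_ite_eq']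
    · have hfun : (fun y => (evalM L y ^ (k+1)) i j)
          = fun y => ∑ c, (evalM L y ^ k) i c * L c j y := by
        funext y; rw [pow_succ, Matrix.mul_apply]; rfl
      rw [hfun, poisson_sum_left _ _
        (fun c _ => (smooth_pow_entry L hL k i c).mul (hL c j)) h x]
      have step : ∀ c : Fin m,
          poisson (fun y => (evalM L y ^ k) i c * L c j y) h x
            = (evalM L x ^ k) i c * poisson (L c j) h x
              + L c j x * poisson (fun y => (evalM L y ^ k) i c) h x := by
        intro c
        exact poisson_mul_left (smooth_pow_entry L hL k i c) (hL c j) h x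
      simp only [step]
      rw [Finset.sum_add_distrib]
      rw [Finset.sum_range_succ', add_comm (∑ a ∈ Finset.range k, _)]
      congr 1
      · -- a = 0 term
        have h0 : ∀ α : Fin m, ∑ β, (evalM L x ^ (k+1-1-0)) i α * (evalM L x ^ 0) β j
              * poisson (L α β) h x
            = (evalM L x ^ k) i α * poisson (L α j) h x := by
          intro α
          simp [Matrix.one_apply]
        simp only [h0]
      · -- terms a = 1..k  vs  ∑ c, L c j x * poisson ((L^k) i c) h x
        have hih : ∀ c, poisson (fun y => (evalM L y ^ k) i c) h x
            = ∑ a ∈ Finset.range k, ∑ α, ∑ β,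
                (evalM L x ^ (k-1-a)) i α * (evalM L x ^ a) β c * poisson (L α β) h x :=
          fun c => ih hk h x i c
        simp only [hih, Finset.mul_sum]
        rw [Finset.sum_comm]
        refine Finset.sum_congr rfl fun a _ => ?_
        rw [Finset.sum_comm]
        refine Finset.sum_congr rfl fun α _ => ?_
        rw [Finset.sum_comm]
        refine Finset.sum_congr rfl fun β _ => ?_
        have hidx : k + 1 - 1 - (a + 1) = k - 1 - a := by omega
        have expand : (evalM L x ^ (a+1)) β j = ∑ c, (evalM L x ^ a) β c * L c j x := by
          rw [pow_succ, Matrix.mul_apply]; rfl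
        rw [hidx, expand, Finset.mul_sum, Finset.sum_mul]
        exact Finset.sum_congr rfl fun c _ => by ring

lemma poisson_pow_right {d m : ℕ} (L' : Matrix (Fin m) (Fin m) (Phase d → ℝ))
    (hL' : ∀ i j, ContDiff ℝ (⊤ : ℕ∞) (L' i j)) (l : ℕ) (hl : 1 ≤ l)
    (f : Phase d → ℝ) (x : Phase d) (k' l' : Fin m) :
    poisson f (fun y => (evalM L' y ^ l) k' l') x
      = ∑ b ∈ Finset.range l, ∑ γ, ∑ δ,
          (evalM L' x ^ (l-1-b)) k' γ * (evalM L' x ^ b) δ l' * poisson f (L' γ δ) x := by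
  rw [poisson_antisymm, poisson_pow_left L' hL' l hl f x k' l', ← Finset.sum_neg_distrib]
  refine Finset.sum_congr rfl fun b _ => ?_
  rw [← Finset.sum_neg_distrib]
  refine Finset.sum_congr rfl fun γ _ => ?_
  rw [← Finset.sum_neg_distrib]
  refine Finset.sum_congr rfl fun δ _ => ?_
  rw [poisson_antisymm f (L' γ δ)]
  ring

section Alg
variable {R : Type*} [Ring R]

lemma key1_s8 (L1 L2 D : R) (h : Commute L1 L2) (u v a b : ℕ) :
    L1^u * L2^v * (D*L1 - L1*D) * (L1^a * L2^b)
      = (L1^u * L2^v * D * L1^a * L2^b) * L1 - L1 * (L1^u * L2^v * D * L1^a * L2^b) := by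
  have c1 : Commute L1 (L1^a * L2^b) :=
    ((Commute.refl L1).pow_right a).mul_right (h.pow_right b)
  have c2 : Commute L1 (L1^u * L2^v) :=
    ((Commute.refl L1).pow_right u).mul_right (h.pow_right v)
  simp only [mul_sub, sub_mul]
  congr 1
  · simp only [mul_assoc]
    rw [c1.eq, mul_assoc]
  · calc L1^u * L2^v * (L1 * D) * (L1^a * L2^b)
        = (L1^u * L2^v * L1) * (D * (L1^a * L2^b)) := by
          simp only [mul_assoc]
      _ = (L1 * (L1^u * L2^v)) * (D * (L1^a * L2^b)) := by rw [← c2.eq]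
      _ = L1 * (L1^u * L2^v * D * L1^a * L2^b) := by simp only [mul_assoc]

lemma key2_s8 (L1 L2 D : R) (h : Commute L1 L2) (u v a b : ℕ) :
    L1^u * L2^v * (D*L2 - L2*D) * (L1^a * L2^b)
      = (L1^u * L2^v * D * L1^a * L2^b) * L2 - L2 * (L1^u * L2^v * D * L1^a * L2^b) := by
  have c1 : Commute L2 (L1^a * L2^b) :=
    ((h.symm.pow_right a)).mul_right ((Commute.refl L2).pow_right b)
  have c2 : Commute L2 (L1^u * L2^v) :=
    ((h.symm.pow_right u)).mul_right ((Commute.refl L2).pow_right v)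
  simp only [mul_sub, sub_mul]
  congr 1
  · simp only [mul_assoc]
    rw [c1.eq, mul_assoc]
  · calc L1^u * L2^v * (L2 * D) * (L1^a * L2^b)
        = (L1^u * L2^v * L2) * (D * (L1^a * L2^b)) := by
          simp only [mul_assoc]
      _ = (L2 * (L1^u * L2^v)) * (D * (L1^a * L2^b)) := by rw [← c2.eq]
      _ = L2 * (L1^u * L2^v * D * L1^a * L2^b) := by simp only [mul_assoc]

end Alg

lemma alg_main {m : ℕ} (L1 L2 D1 D2 : Matrix (Fin m × Fin m) (Fin m × Fin m) ℝ)
    (h : Commute L1 L2) (k l : ℕ) :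
    ∑ a ∈ Finset.range k, ∑ b ∈ Finset.range l,
      L1^(k-1-a) * L2^(l-1-b) * ((D1*L1 - L1*D1) - (D2*L2 - L2*D2)) * (L1^a * L2^b)
      = mcomm (dressed L1 L2 D1 k l) L1 - mcomm (dressed L1 L2 D2 k l) L2 := by
  unfold mcomm dressed
  simp only [Finset.sum_mul, Finset.mul_sum, ← Finset.sum_sub_distrib]
  refine Finset.sum_congr rfl fun a _ => ?_
  refine Finset.sum_congr rfl fun b _ => ?_
  rw [mul_sub, sub_mul]
  have e1 := key1_s8 L1 L2 D1 h (k-1-a) (l-1-b) a b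
  have e2 := key2_s8 L1 L2 D2 h (k-1-a) (l-1-b) a b
  simp only [← mul_assoc] at e1 e2 ⊢
  rw [← e1, ← e2]

lemma kron_pow_left {m : ℕ} (A : Matrix (Fin m) (Fin m) ℝ) (c : ℕ) :
    (A ⊗ₖ (1 : Matrix (Fin m) (Fin m) ℝ)) ^ c = (A ^ c) ⊗ₖ (1 : Matrix (Fin m) (Fin m) ℝ) := by
  induction c with
  | zero => simp [Matrix.one_kronecker_one]
  | succ c ih => rw [pow_succ, pow_succ, ih, ← Matrix.mul_kronecker_mul, mul_one]

lemma kron_pow_right {m : ℕ} (B : Matrix (Fin m) (Fin m) ℝ) (c : ℕ) :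
    ((1 : Matrix (Fin m) (Fin m) ℝ) ⊗ₖ B) ^ c = (1 : Matrix (Fin m) (Fin m) ℝ) ⊗ₖ (B ^ c) := by
  induction c with
  | zero => simp [Matrix.one_kronecker_one]
  | succ c ih => rw [pow_succ, pow_succ, ih, ← Matrix.mul_kronecker_mul, mul_one]

lemma kron_commute {m : ℕ} (A B : Matrix (Fin m) (Fin m) ℝ) :
    Commute (A ⊗ₖ (1 : Matrix (Fin m) (Fin m) ℝ)) ((1 : Matrix (Fin m) (Fin m) ℝ) ⊗ₖ B) := by
  unfold Commute SemiconjBy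
  rw [← Matrix.mul_kronecker_mul, ← Matrix.mul_kronecker_mul]
  simp

lemma kron_mul_kron {m : ℕ} (A B : Matrix (Fin m) (Fin m) ℝ) (c e : ℕ) :
    (A ⊗ₖ (1 : Matrix (Fin m) (Fin m) ℝ)) ^ c * ((1 : Matrix (Fin m) (Fin m) ℝ) ⊗ₖ B) ^ e
      = (A ^ c) ⊗ₖ (B ^ e) := by
  rw [kron_pow_left, kron_pow_right, ← Matrix.mul_kronecker_mul, mul_one, one_mul]

lemma sandwich_entry {m : ℕ} (M N M' N' : Matrix (Fin m) (Fin m) ℝ)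
    (Q : Matrix (Fin m × Fin m) (Fin m × Fin m) ℝ) (i j k' l' : Fin m) :
    ((M ⊗ₖ M') * Q * (N ⊗ₖ N')) (i, k') (j, l')
      = ∑ α, ∑ β, M i α * N β j *
          (∑ γ, ∑ δ, M' k' γ * N' δ l' * Q (α, γ) (β, δ)) := by
  rw [Matrix.mul_assoc]
  simp only [Matrix.mul_apply, Matrix.kroneckerMap_apply, Fintype.sum_prod_type,
    Finset.mul_sum, Finset.sum_mul]
  refine Finset.sum_congr rfl fun α _ => ?_
  rw [Finset.sum_comm]
  refine Finset.sum_congr rfl fun β _ => ?_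
  refine Finset.sum_congr rfl fun γ _ => ?_
  refine Finset.sum_congr rfl fun δ _ => ?_
  ring

set_option maxHeartbeats 1000000 in
/-- the Poisson bracket matrix of powers L^k, L'^l retains the linear
r-matrix form with the dressed matrices d₁₂^{(k,l)}, d₂₁^{(k,l)}. -/
theorem bracket_of_powers
    (d m : ℕ) (hd : 1 ≤ d) (hm : 1 ≤ m)
    (L L' : Matrix (Fin m) (Fin m) (Phase d → ℝ))
    (hL : ∀ i j, ContDiff ℝ (⊤ : ℕ∞) (L i j)) (hL' : ∀ i j, ContDiff ℝ (⊤ : ℕ∞) (L' i j))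
    (d12 d21 : Matrix (Fin m × Fin m) (Fin m × Fin m) (Phase d → ℝ))
    (hd12 : ∀ a b, ContDiff ℝ (⊤ : ℕ∞) (d12 a b)) (hd21 : ∀ a b, ContDiff ℝ (⊤ : ℕ∞) (d21 a b))
    (hrs : ∀ x : Phase d, ∀ i j k l : Fin m,
      poisson (L i j) (L' k l) x
        = (mcomm (evalM d12 x) (evalM L x ⊗ₖ (1 : Matrix (Fin m) (Fin m) ℝ))
            - mcomm (evalM d21 x) ((1 : Matrix (Fin m) (Fin m) ℝ) ⊗ₖ evalM L' x))
            (i, k) (j, l)) :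
    ∀ k l : ℕ, 1 ≤ k → 1 ≤ l → ∀ x : Phase d, ∀ i j k' l' : Fin m,
      poisson (fun y => (evalM L y ^ k) i j) (fun y => (evalM L' y ^ l) k' l') x
        = (mcomm (dressed (evalM L x ⊗ₖ (1 : Matrix (Fin m) (Fin m) ℝ))
              ((1 : Matrix (Fin m) (Fin m) ℝ) ⊗ₖ evalM L' x) (evalM d12 x) k l)
              (evalM L x ⊗ₖ (1 : Matrix (Fin m) (Fin m) ℝ))
            - mcomm (dressed (evalM L x ⊗ₖ (1 : Matrix (Fin m) (Fin m) ℝ))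
              ((1 : Matrix (Fin m) (Fin m) ℝ) ⊗ₖ evalM L' x) (evalM d21 x) k l)
              ((1 : Matrix (Fin m) (Fin m) ℝ) ⊗ₖ evalM L' x))
            (i, k') (j, l') := by
  intro k l hk hl x i j k' l'
  have halg := alg_main (evalM L x ⊗ₖ (1 : Matrix (Fin m) (Fin m) ℝ))
    ((1 : Matrix (Fin m) (Fin m) ℝ) ⊗ₖ evalM L' x)
    (evalM d12 x) (evalM d21 x) (kron_commute _ _) k l
  rw [← halg]
  have hrs' : ∀ α β γ δ : Fin m, poisson (L α β) (L' γ δ) x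
      = ((evalM d12 x * (evalM L x ⊗ₖ (1 : Matrix (Fin m) (Fin m) ℝ))
            - (evalM L x ⊗ₖ (1 : Matrix (Fin m) (Fin m) ℝ)) * evalM d12 x)
          - (evalM d21 x * ((1 : Matrix (Fin m) (Fin m) ℝ) ⊗ₖ evalM L' x)
            - ((1 : Matrix (Fin m) (Fin m) ℝ) ⊗ₖ evalM L' x) * evalM d21 x)) (α, γ) (β, δ) := by
    intro α β γ δ
    rw [hrs x α β γ δ]
    simp [mcomm]
  rw [poisson_pow_left L hL k hk]
  simp only [poisson_pow_right L' hL' l hl]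
  simp only [hrs']
  simp only [Matrix.sum_apply]
  simp only [kron_mul_kron, sandwich_entry]
  refine Finset.sum_congr rfl fun a _ => ?_
  simp only [Finset.mul_sum]
  exact Eq.trans (Finset.sum_congr rfl fun α _ => Finset.sum_comm) Finset.sum_comm
end
end
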